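/- For all real ρ < 1/3 and integer b > 0 there exists a bound T, depending only on ρ and b, such that in every execution of algorithm Counting-Backoff against a 1-activating adversary of type (ρ, b), every injected packet is heard within T rounds of its injection; that is, Counting-Backoff has bounded packet latency against every 1-activating adversary of injection rate less than 1/3. -/
import Mathlib


/-- Admissibility of a 1-activating injection pattern `a` (in round `t`, a fresh passive
station labelled `t` is activated with `a t` packets, when `a t > 0`) for the leaky-bucket
adversary of type `(ρ, b)`: in every contiguous interval of rounds the total number of
injected packets is at most `ρ·|τ| + b`. -/
def Admissible (ρ : ℝ) (b : ℕ) (a : ℕ → ℕ) : Prop :=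
  ∀ s n : ℕ, ((∑ t ∈ Finset.Ico s (s + n), a t : ℕ) : ℝ) ≤ ρ * n + b

/-- One round of algorithm Counting-Backoff on a channel with collision detection.
A configuration `c` assigns to every station `v` (identified with its activation round)
its number `c.1 v` of pending packets and its integer `c.2 v` = backoff_counter, both at
the beginning of the round.  An active station transmits iff its backoff_counter is `≤ 1`;
after a collision every active station increments its counter, after a silent round it
decrements it; a station whose own packet was heard sets the counter to 1 if it is still
active, and a passive station has counter 0.  At the end of round `t` the station `t`
receives its `a t` injected packets (with counter 0). -/
def cbStep (a : ℕ → ℕ) (t : ℕ) (c : (ℕ → ℕ) × (ℕ → ℤ)) : (ℕ → ℕ) × (ℕ → ℤ) :=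
  let pend := c.1
  let ctr := c.2
  let tx : Finset ℕ := (Finset.range t).filter fun v => 0 < pend v ∧ ctr v ≤ 1
  (fun v => (if v ∈ tx ∧ tx.card = 1 then pend v - 1 else pend v) + (if v = t then a t else 0),
   fun v =>
    if pend v = 0 then 0
    else if v ∈ tx ∧ tx.card = 1 then (if pend v - 1 = 0 then 0 else 1)
    else if 2 ≤ tx.card then ctr v + 1
    else if tx.card = 0 then ctr v - 1
    else ctr v)

/-- The configuration of the execution of Counting-Backoff against the 1-activating
injection pattern `a` at the beginning of round `t`: `(cbCfg a t).1 v` is the number of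
packets pending at station `v` and `(cbCfg a t).2 v` is its backoff_counter. -/
def cbCfg (a : ℕ → ℕ) : ℕ → (ℕ → ℕ) × (ℕ → ℤ)
  | 0 => (fun _ => 0, fun _ => 0)
  | t + 1 => cbStep a t (cbCfg a t)

namespace CB

variable (a : ℕ → ℕ)

def P (t v : ℕ) : ℕ := (cbCfg a t).1 v
def K (t v : ℕ) : ℤ := (cbCfg a t).2 v
def tx (t : ℕ) : Finset ℕ := (Finset.range t).filter fun v => 0 < P a t v ∧ K a t v ≤ 1

lemma P_succ (t v : ℕ) :
    P a (t+1) v = (if v ∈ tx a t ∧ (tx a t).card = 1 then P a t v - 1 else P a t v)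
      + (if v = t then a t else 0) := rfl

lemma K_succ (t v : ℕ) :
    K a (t+1) v =
      if P a t v = 0 then 0
      else if v ∈ tx a t ∧ (tx a t).card = 1 then (if P a t v - 1 = 0 then 0 else 1)
      else if 2 ≤ (tx a t).card then K a t v + 1
      else if (tx a t).card = 0 then K a t v - 1
      else K a t v := rfl

lemma mem_tx {t v : ℕ} : v ∈ tx a t ↔ v < t ∧ 0 < P a t v ∧ K a t v ≤ 1 := by
  simp [tx, Finset.mem_filter, Finset.mem_range]

lemma notMem_tx_of_ge {t v : ℕ} (h : t ≤ v) : v ∉ tx a t := by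
  simp [mem_tx]; omega

/-- Stations not yet activated are idle. -/
lemma P_of_le : ∀ t v : ℕ, t ≤ v → P a t v = 0 ∧ K a t v = 0 := by
  intro t
  induction t with
  | zero => intro v _; exact ⟨rfl, rfl⟩
  | succ t ih =>
    intro v hv
    have h1 : t ≤ v := by omega
    have hvt : v ≠ t := by omega
    have hnm : v ∉ tx a t := notMem_tx_of_ge a h1
    constructor
    · rw [P_succ]
      simp [hvt, hnm, (ih v h1).1]
    · rw [K_succ]
      simp [(ih v h1).1]

/-- A passive station has counter 0. -/
lemma K_eq_zero : ∀ t v : ℕ, P a t v = 0 → K a t v = 0 := by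
  intro t
  induction t with
  | zero => intro v _; rfl
  | succ t ih =>
    intro v hp
    rw [K_succ]
    by_cases h0 : P a t v = 0
    · simp [h0]
    · rw [P_succ] at hp
      obtain ⟨h1, h2⟩ := Nat.add_eq_zero.mp hp
      by_cases hc : v ∈ tx a t ∧ (tx a t).card = 1
      · rw [if_pos hc] at h1
        simp [h0, hc, h1]
      · rw [if_neg hc] at h1
        exact absurd h1 h0

/-- Fresh station has counter 0. -/
lemma K_fresh (t : ℕ) : K a (t+1) t = 0 := by
  rw [K_succ]; simp [(P_of_le a t t le_rfl).1]

/-- Fresh station's pending packets are exactly `a t`. -/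
lemma P_fresh (t : ℕ) : P a (t+1) t = a t := by
  rw [P_succ]
  simp [notMem_tx_of_ge a (le_refl t), (P_of_le a t t le_rfl).1]


/-- Stations with positive counter are active (helper). -/
lemma active_of_succ {t v : ℕ} (hvt : v ≠ t) (hp : P a (t+1) v ≠ 0) :
    P a t v ≠ 0 ∧ v < t := by
  have hPv : P a t v ≠ 0 := by
    intro h0
    have hnm : v ∉ tx a t := by simp [mem_tx, h0]
    rw [P_succ] at hp
    simp [h0, hnm, hvt] at hp
  refine ⟨hPv, ?_⟩
  by_contra h
  exact hPv (P_of_le a t v (by omega)).1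

/-- Active stations not in `tx` have counter at least 2. -/
lemma two_le_K {t v : ℕ} (hlt : v < t) (hp : P a t v ≠ 0) (hnm : v ∉ tx a t) :
    2 ≤ K a t v := by
  by_contra h
  exact hnm ((mem_tx a).mpr ⟨hlt, Nat.pos_of_ne_zero hp, by omega⟩)

/-- Main structural invariant: counters of active stations are injective, and every
active station other than the freshest one has counter at least 1. -/
lemma inv : ∀ t : ℕ,
    (∀ v w, P a t v ≠ 0 → P a t w ≠ 0 → K a t v = K a t w → v = w)
    ∧ (∀ v, P a t v ≠ 0 → v + 1 ≠ t → 1 ≤ K a t v) := by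
  intro t
  induction t with
  | zero => exact ⟨fun v w hv _ _ => absurd rfl hv, fun v hv _ => absurd rfl hv⟩
  | succ t ih =>
    obtain ⟨ih1, ih2⟩ := ih
    have part2 : ∀ v, P a (t+1) v ≠ 0 → v + 1 ≠ t + 1 → 1 ≤ K a (t+1) v := by
      intro v hp hvt1
      have hvt : v ≠ t := by omega
      obtain ⟨hPv, hvlt⟩ := active_of_succ a hvt hp
      rw [K_succ, if_neg hPv]
      by_cases hc : v ∈ tx a t ∧ (tx a t).card = 1
      · rw [if_pos hc]
        have hP1 : P a t v - 1 ≠ 0 := by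
          rw [P_succ, if_pos hc, if_neg hvt] at hp
          simpa using hp
        rw [if_neg hP1]
      · rw [if_neg hc]
        by_cases h2 : 2 ≤ (tx a t).card
        · rw [if_pos h2]
          by_cases hft : v + 1 = t
          · have hK0 : K a t v = 0 := by
              have h := K_fresh a v
              rwa [hft] at h
            omega
          · have := ih2 v hPv hft; omega
        · have hnm : v ∉ tx a t := by
            intro hm
            have h1 : 1 ≤ (tx a t).card := Finset.card_pos.mpr ⟨v, hm⟩
            exact hc ⟨hm, by omega⟩
          have hK2 := two_le_K a hvlt hPv hnm
          rw [if_neg h2]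
          split <;> omega
    refine ⟨?_, part2⟩
    intro v w hv hw hk
    by_cases hvt : v = t
    · by_cases hwt : w = t
      · rw [hvt, hwt]
      · exfalso
        have h1 : K a (t+1) t = 0 := K_fresh a t
        have h2 : 1 ≤ K a (t+1) w := part2 w hw (by omega)
        rw [hvt] at hk; omega
    · by_cases hwt : w = t
      · exfalso
        have h1 : K a (t+1) t = 0 := K_fresh a t
        have h2 : 1 ≤ K a (t+1) v := part2 v hv (by omega)
        rw [hwt] at hk; omega
      · obtain ⟨hPv, hvlt⟩ := active_of_succ a hvt hv
        obtain ⟨hPw, hwlt⟩ := active_of_succ a hwt hw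
        rw [K_succ, if_neg hPv, K_succ, if_neg hPw] at hk
        by_cases h2 : 2 ≤ (tx a t).card
        · have hcv : ¬(v ∈ tx a t ∧ (tx a t).card = 1) := fun h => by omega
          have hcw : ¬(w ∈ tx a t ∧ (tx a t).card = 1) := fun h => by omega
          rw [if_neg hcv, if_pos h2, if_neg hcw, if_pos h2] at hk
          exact ih1 v w hPv hPw (by omega)
        · by_cases h0 : (tx a t).card = 0
          · have hcv : ¬(v ∈ tx a t ∧ (tx a t).card = 1) := fun h => by omega
            have hcw : ¬(w ∈ tx a t ∧ (tx a t).card = 1) := fun h => by omega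
            rw [if_neg hcv, if_neg h2, if_pos h0, if_neg hcw, if_neg h2, if_pos h0] at hk
            exact ih1 v w hPv hPw (by omega)
          · have h1 : (tx a t).card = 1 := by omega
            by_cases hv1 : v ∈ tx a t
            · by_cases hw1 : w ∈ tx a t
              · obtain ⟨u, hu⟩ := Finset.card_eq_one.mp h1
                rw [hu, Finset.mem_singleton] at hv1 hw1
                rw [hv1, hw1]
              · exfalso
                have hKw := two_le_K a hwlt hPw hw1
                have hcw : ¬(w ∈ tx a t ∧ (tx a t).card = 1) := fun h => hw1 h.1
                rw [if_pos (And.intro hv1 h1), if_neg hcw, if_neg h2, if_neg h0] at hk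
                split at hk <;> omega
            · by_cases hw1 : w ∈ tx a t
              · exfalso
                have hKv := two_le_K a hvlt hPv hv1
                have hcv : ¬(v ∈ tx a t ∧ (tx a t).card = 1) := fun h => hv1 h.1
                rw [if_pos (And.intro hw1 h1), if_neg hcv, if_neg h2, if_neg h0] at hk
                split at hk <;> omega
              · have hcv : ¬(v ∈ tx a t ∧ (tx a t).card = 1) := fun h => hv1 h.1
                have hcw : ¬(w ∈ tx a t ∧ (tx a t).card = 1) := fun h => hw1 h.1
                rw [if_neg hcv, if_neg h2, if_neg h0, if_neg hcw, if_neg h2, if_neg h0] at hk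
                exact ih1 v w hPv hPw hk

/-- A collision in round `t+1` requires a fresh injection in round `t`. -/
lemma coll {t : ℕ} (h : 2 ≤ (tx a (t+1)).card) : 0 < a t := by
  have hfresh : t ∈ tx a (t+1) := by
    by_contra ht
    obtain ⟨x, hx, y, hy, hxy⟩ := Finset.one_lt_card.mp h
    obtain ⟨hxlt, hxp, hxk⟩ := (mem_tx a).mp hx
    obtain ⟨hylt, hyp, hyk⟩ := (mem_tx a).mp hy
    have hxt : x ≠ t := fun hh => ht (hh ▸ hx)
    have hyt : y ≠ t := fun hh => ht (hh ▸ hy)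
    have hx1 : 1 ≤ K a (t+1) x := (inv a (t+1)).2 x (by omega) (by omega)
    have hy1 : 1 ≤ K a (t+1) y := (inv a (t+1)).2 y (by omega) (by omega)
    exact hxy ((inv a (t+1)).1 x y (by omega) (by omega) (by omega))
  have := ((mem_tx a).mp hfresh).2.1
  rwa [P_fresh] at this


/-! ### The potential function -/

def Q (t : ℕ) : ℕ := ∑ v ∈ Finset.range t, P a t v
def psi (t : ℕ) : ℕ := (Finset.range t).sup fun v => (K a t v).toNat
def Phi (t : ℕ) : ℕ := Q a t + max (psi a t) 1

lemma K_toNat_le {t v : ℕ} (hv : v < t) : (K a t v).toNat ≤ psi a t :=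
  Finset.le_sup (f := fun v => (K a t v).toNat) (Finset.mem_range.mpr hv)

lemma Phi_zero : Phi a 0 = 1 := by
  simp [Phi, Q, psi]

lemma Q_succ (t : ℕ) :
    Q a (t+1) + (if (tx a t).card = 1 then 1 else 0) = Q a t + a t := by
  have hsplit : Q a (t+1) = (∑ v ∈ Finset.range t, P a (t+1) v) + a t := by
    rw [Q, Finset.sum_range_succ, P_fresh]
  by_cases h1 : (tx a t).card = 1
  · obtain ⟨u, hu⟩ := Finset.card_eq_one.mp h1
    have hum : u ∈ tx a t := by rw [hu]; exact Finset.mem_singleton_self u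
    obtain ⟨hult, hup, _⟩ := (mem_tx a).mp hum
    have humem : u ∈ Finset.range t := Finset.mem_range.mpr hult
    have e1 : P a (t+1) u + ∑ v ∈ (Finset.range t).erase u, P a (t+1) v
        = ∑ v ∈ Finset.range t, P a (t+1) v := Finset.add_sum_erase _ _ humem
    have e2 : P a t u + ∑ v ∈ (Finset.range t).erase u, P a t v
        = Q a t := Finset.add_sum_erase _ _ humem
    have e3 : ∑ v ∈ (Finset.range t).erase u, P a (t+1) v
        = ∑ v ∈ (Finset.range t).erase u, P a t v := by
      apply Finset.sum_congr rfl
      intro v hv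
      obtain ⟨hvu, hvr⟩ := Finset.mem_erase.mp hv
      have hvlt : v < t := Finset.mem_range.mp hvr
      have hc : ¬(v ∈ tx a t ∧ (tx a t).card = 1) := by
        intro h
        have : v ∈ ({u} : Finset ℕ) := hu ▸ h.1
        exact hvu (Finset.mem_singleton.mp this)
      rw [P_succ, if_neg hc, if_neg (by omega : ¬ v = t)]
      omega
    have e4 : P a (t+1) u = P a t u - 1 := by
      rw [P_succ, if_pos ⟨hum, h1⟩, if_neg (by omega : ¬ u = t)]
      omega
    rw [if_pos h1]
    omega
  · have e3 : ∑ v ∈ Finset.range t, P a (t+1) v = Q a t := by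
      apply Finset.sum_congr rfl
      intro v hv
      have hvlt : v < t := Finset.mem_range.mp hv
      have hc : ¬(v ∈ tx a t ∧ (tx a t).card = 1) := fun h => h1 h.2
      rw [P_succ, if_neg hc, if_neg (by omega : ¬ v = t)]
      omega
    rw [if_neg h1]
    omega

lemma Phi_empty (t : ℕ) (h : ∀ v, P a t v = 0) : Phi a (t+1) = a t + 1 := by
  have hQ : Q a (t+1) = a t := by
    rw [Q, Finset.sum_range_succ, P_fresh]
    have hz : ∀ v ∈ Finset.range t, P a (t+1) v = 0 := by
      intro v hv
      have hvlt : v < t := Finset.mem_range.mp hv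
      have hnm : v ∉ tx a t := by simp [mem_tx, h v]
      rw [P_succ, if_neg (fun hc => hnm hc.1), if_neg (by omega : ¬ v = t), h v]
    rw [Finset.sum_eq_zero hz]
    omega
  have hpsi : psi a (t+1) = 0 := by
    apply Nat.eq_zero_of_le_zero
    apply Finset.sup_le
    intro v _
    rw [K_succ, if_pos (h v)]
    simp
  rw [Phi, hQ, hpsi]
  omega

lemma Phi_step (t : ℕ) (hne : ∃ v, P a t v ≠ 0) :
    Phi a (t+1) + 1 ≤ Phi a t + a t + (if 2 ≤ (tx a t).card then 2 else 0) := by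
  obtain ⟨v0, hv0⟩ := hne
  have hv0t : v0 < t := by
    by_contra h
    exact hv0 (P_of_le a t v0 (by omega)).1
  by_cases h2 : 2 ≤ (tx a t).card
  · -- collision round
    rw [if_pos h2]
    have hQ : Q a (t+1) = Q a t + a t := by
      have h := Q_succ a t
      rw [if_neg (by omega : ¬(tx a t).card = 1)] at h
      omega
    have hpsi : psi a (t+1) ≤ psi a t + 1 := by
      apply Finset.sup_le
      intro v hv
      have hvlt : v < t + 1 := Finset.mem_range.mp hv
      by_cases hvt : v = t
      · subst hvt
        rw [K_fresh]
        simp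
      · have hvlt' : v < t := by omega
        rw [K_succ]
        by_cases hp : P a t v = 0
        · simp [hp]
        · have hcv : ¬(v ∈ tx a t ∧ (tx a t).card = 1) := fun h => by omega
          rw [if_neg hp, if_neg hcv, if_pos h2]
          have := K_toNat_le a hvlt'
          omega
    rw [Phi, Phi, hQ]
    omega
  · by_cases h0 : (tx a t).card = 0
    · -- silent round with an active station
      rw [if_neg h2]
      have hnm0 : v0 ∉ tx a t := by
        rw [Finset.card_eq_zero.mp h0]
        exact Finset.notMem_empty v0
      have hK0 : 2 ≤ K a t v0 := two_le_K a hv0t hv0 hnm0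
      have hpsi2 : 2 ≤ psi a t :=
        le_trans (by omega : 2 ≤ (K a t v0).toNat) (K_toNat_le a hv0t)
      have hQ : Q a (t+1) = Q a t + a t := by
        have h := Q_succ a t
        rw [if_neg (by omega : ¬(tx a t).card = 1)] at h
        omega
      have hpsi : psi a (t+1) + 1 ≤ psi a t := by
        have hb : psi a (t+1) ≤ psi a t - 1 := by
          apply Finset.sup_le
          intro v hv
          have hvlt : v < t + 1 := Finset.mem_range.mp hv
          by_cases hvt : v = t
          · subst hvt
            rw [K_fresh]
            omega
          · have hvlt' : v < t := by omega
            rw [K_succ]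
            by_cases hp : P a t v = 0
            · simp [hp]
            · have hnm : v ∉ tx a t := by
                rw [Finset.card_eq_zero.mp h0]
                exact Finset.notMem_empty v
              have hKv : 2 ≤ K a t v := two_le_K a hvlt' hp hnm
              have hcv : ¬(v ∈ tx a t ∧ (tx a t).card = 1) := fun h => hnm h.1
              rw [if_neg hp, if_neg hcv, if_neg h2, if_pos h0]
              have := K_toNat_le a hvlt'
              omega
        omega
      rw [Phi, Phi, hQ]
      omega
    · -- successful transmission
      have h1 : (tx a t).card = 1 := by
        have := Finset.card_eq_zero (s := tx a t)
        omega
      rw [if_neg h2]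
      have hQ : Q a (t+1) + 1 = Q a t + a t := by
        have h := Q_succ a t
        rw [if_pos h1] at h
        omega
      have hQ1 : 1 ≤ Q a t + a t := by omega
      have hpsi : psi a (t+1) ≤ max (psi a t) 1 := by
        apply Finset.sup_le
        intro v hv
        have hvlt : v < t + 1 := Finset.mem_range.mp hv
        by_cases hvt : v = t
        · subst hvt
          rw [K_fresh]
          simp
        · have hvlt' : v < t := by omega
          rw [K_succ]
          by_cases hp : P a t v = 0
          · simp [hp]
          · rw [if_neg hp]
            by_cases hc : v ∈ tx a t ∧ (tx a t).card = 1
            · rw [if_pos hc]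
              split <;> omega
            · rw [if_neg hc, if_neg h2, if_neg (by omega : ¬(tx a t).card = 0)]
              have := K_toNat_le a hvlt'
              omega
      rw [Phi, Phi]
      omega


/-! ### Window estimate -/

lemma window (s : ℕ) (hs : 1 ≤ s) :
    ∀ n : ℕ, (∀ m, m < n → ∃ v, P a (s+m) v ≠ 0) →
    Phi a (s+n) + n ≤ Phi a s + (∑ t ∈ Finset.Ico s (s+n), a t)
      + 2 * (∑ t ∈ Finset.Ico (s-1) (s-1+n), a t) := by
  intro n
  induction n with
  | zero => intro _; simp
  | succ n ih =>
    intro hne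
    have h1 := ih (fun m hm => hne m (by omega))
    have h2 := Phi_step a (s+n) (hne n (by omega))
    have hcol : (if 2 ≤ (tx a (s+n)).card then 2 else 0) ≤ 2 * a (s-1+n) := by
      split
      · next h =>
          rw [show s + n = (s - 1 + n) + 1 by omega] at h
          have := coll a h
          omega
      · omega
    rw [show s + (n+1) = (s+n)+1 by omega,
        Finset.sum_Ico_succ_top (by omega : s ≤ s + n),
        show s - 1 + (n+1) = (s-1+n)+1 by omega,
        Finset.sum_Ico_succ_top (by omega : s - 1 ≤ s - 1 + n)]
    omega

/-! ### Consequences of admissibility -/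

lemma a_le_b {ρ : ℝ} {b : ℕ} (hA : Admissible ρ b a) (hρ : ρ < 1/3) (t : ℕ) :
    a t ≤ b := by
  have h := hA t 1
  rw [Finset.sum_Ico_succ_top (le_refl t), Finset.Ico_self, Finset.sum_empty] at h
  have : (a t : ℝ) < ((b + 1 : ℕ) : ℝ) := by push_cast at h ⊢; linarith
  have := Nat.cast_lt (α := ℝ) |>.mp this
  omega

/-- Global bound on the potential. -/
lemma Phi_le {ρ : ℝ} {b : ℕ} (hA : Admissible ρ b a) (hρ0 : 0 ≤ ρ) (hρ : ρ < 1/3) :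
    ∀ t, Phi a t ≤ 4*b + 1 := by
  intro t
  match t with
  | 0 => rw [Phi_zero]; omega
  | t' + 1 =>
    classical
    set Emp : ℕ → Prop := fun m => ∀ v ∈ Finset.range m, P a m v = 0 with hE
    set m := Nat.findGreatest Emp t' with hm
    have hm_le : m ≤ t' := Nat.findGreatest_le t'
    have hEmp0 : Emp 0 := by intro v hv; simp at hv
    have hEm : Emp m := Nat.findGreatest_spec (Nat.zero_le t') hEmp0
    have hall : ∀ v, P a m v = 0 := by
      intro v
      by_cases hv : v < m
      · exact hEm v (Finset.mem_range.mpr hv)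
      · exact (P_of_le a m v (by omega)).1
    have hPhi1 : Phi a (m+1) = a m + 1 := Phi_empty a m hall
    have hab : a m ≤ b := a_le_b a hA hρ m
    set n := t' - m with hn
    have hne : ∀ j, j < n → ∃ v, P a (m+1+j) v ≠ 0 := by
      intro j hj
      have hk : ¬ Emp (m+1+j) :=
        Nat.findGreatest_is_greatest (n := t') (show m < m+1+j by omega) (by omega)
      by_contra hc
      push_neg at hc
      exact hk (fun v _ => hc v)
    have hw := window a (m+1) (by omega) n hne
    rw [Nat.add_sub_cancel] at hw
    have hs1 : ((∑ t ∈ Finset.Ico (m+1) (m+1+n), a t : ℕ) : ℝ) ≤ ρ * n + b := hA (m+1) n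
    have hs2 : ((∑ t ∈ Finset.Ico m (m+n), a t : ℕ) : ℝ) ≤ ρ * n + b := hA m n
    have hwR : (Phi a (m+1+n) : ℝ) + n ≤ (b + 1 : ℝ) + (ρ*n+b) + 2*(ρ*n+b) := by
      have hcast : (Phi a (m+1+n) : ℝ) + n ≤ (Phi a (m+1) : ℝ)
          + ((∑ t ∈ Finset.Ico (m+1) (m+1+n), a t : ℕ) : ℝ)
          + 2 * ((∑ t ∈ Finset.Ico m (m+n), a t : ℕ) : ℝ) := by
        exact_mod_cast hw
      have hp1 : (Phi a (m+1) : ℝ) ≤ (b : ℝ) + 1 := by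
        rw [hPhi1]
        push_cast
        have : (a m : ℝ) ≤ (b : ℝ) := Nat.cast_le.mpr hab
        linarith
      linarith
    have hfin : (Phi a (m+1+n) : ℝ) ≤ 4*(b:ℝ) + 1 := by
      have h3n : 3 * ρ * (n : ℝ) ≤ (n : ℝ) := by
        have hn0 : (0:ℝ) ≤ (n : ℝ) := Nat.cast_nonneg n
        nlinarith
      linarith
    have hfinal : Phi a (m+1+n) ≤ 4*b + 1 := by
      have : (Phi a (m+1+n) : ℝ) ≤ ((4*b + 1 : ℕ) : ℝ) := by push_cast; linarith
      exact_mod_cast this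
    rw [show m+1+n = t'+1 by omega] at hfinal
    exact hfinal

/-! ### Monotonicity of pending packets -/

lemma P_succ_le (t v : ℕ) (h : v < t) : P a (t+1) v ≤ P a t v := by
  rw [P_succ, if_neg (by omega : ¬ v = t)]
  split <;> omega

lemma P_mono (v t1 : ℕ) (h : v < t1) : ∀ t2, t1 ≤ t2 → P a t2 v ≤ P a t1 v := by
  intro t2 ht
  induction t2 with
  | zero => exact absurd ht (by omega)
  | succ t2 ih =>
    rcases Nat.lt_or_ge t1 (t2+1) with h' | h'
    · exact le_trans (P_succ_le a t2 v (by omega)) (ih (by omega))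
    · have he : t1 = t2 + 1 := by omega
      rw [he]

end CB

/-- for every real `ρ < 1/3` (with `0 < ρ`, as required of an adversary's
injection rate) and every integer `b > 0` there is a bound `T`, depending only on `ρ` and
`b`, such that in every execution of Counting-Backoff against a 1-activating injection
pattern admissible for the adversary of type `(ρ, b)`, every station activated in a round
`v` has all its packets heard within `T` rounds (its queue is empty at the beginning of
round `v + T + 1`); that is, Counting-Backoff has bounded packet latency against every
1-activating adversary of injection rate less than `1/3`. -/
theorem counting_backoff_bounded_latency (ρ : ℝ) (b : ℕ)
    (h0 : 0 < ρ) (hρ : ρ < 1/3) (hb : 0 < b) :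
    ∃ T : ℕ, ∀ a : ℕ → ℕ, Admissible ρ b a → ∀ v : ℕ, (cbCfg a (v + T + 1)).1 v = 0 := by
  have h3 : 0 < 1 - 3*ρ := by linarith
  refine ⟨⌈(7*(b:ℝ)+2)/(1-3*ρ)⌉₊, ?_⟩
  intro a hA v
  set T := ⌈(7*(b:ℝ)+2)/(1-3*ρ)⌉₊ with hT
  by_contra hP
  have hP' : CB.P a (v+T+1) v ≠ 0 := hP
  have hne : ∀ m, m < T → ∃ w, CB.P a (v+1+m) w ≠ 0 := by
    intro m hm
    refine ⟨v, fun h0' => hP' ?_⟩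
    have hmono := CB.P_mono a v (v+1+m) (by omega) (v+T+1) (by omega)
    omega
  have hw := CB.window a (v+1) (by omega) T hne
  rw [Nat.add_sub_cancel] at hw
  have hPhis : CB.Phi a (v+1) ≤ 4*b+1 := CB.Phi_le a hA (le_of_lt h0) hρ (v+1)
  have hs1 : ((∑ t ∈ Finset.Ico (v+1) (v+1+T), a t : ℕ) : ℝ) ≤ ρ * T + b := hA (v+1) T
  have hs2 : ((∑ t ∈ Finset.Ico v (v+T), a t : ℕ) : ℝ) ≤ ρ * T + b := hA v T
  have hwR : (T : ℝ) ≤ (4*(b:ℝ)+1) + (ρ*T+b) + 2*(ρ*T+b) := by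
    have hcast : (CB.Phi a (v+1+T) : ℝ) + T ≤ (CB.Phi a (v+1) : ℝ)
        + ((∑ t ∈ Finset.Ico (v+1) (v+1+T), a t : ℕ) : ℝ)
        + 2 * ((∑ t ∈ Finset.Ico v (v+T), a t : ℕ) : ℝ) := by
      exact_mod_cast hw
    have hp1 : (CB.Phi a (v+1) : ℝ) ≤ 4*(b:ℝ)+1 := by
      have : ((CB.Phi a (v+1) : ℕ) : ℝ) ≤ ((4*b+1 : ℕ) : ℝ) := Nat.cast_le.mpr hPhis
      push_cast at this
      linarith
    have hpos : (0:ℝ) ≤ (CB.Phi a (v+1+T) : ℝ) := Nat.cast_nonneg _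
    linarith
  have hceil : (7*(b:ℝ)+2) ≤ (T:ℝ) * (1-3*ρ) := by
    have := Nat.le_ceil ((7*(b:ℝ)+2)/(1-3*ρ))
    rw [← hT] at this
    exact (div_le_iff₀ h3).mp this
  nlinarith
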